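/- Let A ∈ ℂ^{m×n} with m ≥ n be injective, with entries A_{k,i} = xₖ^{dᵢ}, and let λ = d − δ(n), λ[i] = d⟨i⟩ − δ(n−1). For j ≠ i (indices in {1,…,n}), the (j,i) minor M_{ji} of A*A (the determinant of the (n−1)×(n−1) matrix obtained by deleting row j and column i from A*A) satisfies M_{ji} = ∑_{l ∈ C([m],n−1)} s_{λ[i]}(x_l) · conj(s_{λ[j]}(x_l)) · |V(x_l)|². -/

import Mathlib

/-!
Deleting row `j` and column `i` of `A*A` gives `B_j* B_i`, where `B_p` is `A` without column `p`.
By the Cauchy–Binet formula its determinant is the sum, over the `(n-1)`-row subsets `l`, of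
`conj (det (B_j)_l) * det (B_i)_l`. Each `(B_p)_l` is a generalized Vandermonde matrix in the
variables `x_l` with strictly decreasing exponents `d⟨p⟩`, so its determinant is
`s_{λ[p]}(x_l) V(x_l)`, and `V conj V = |V|²`.
-/

open scoped BigOperators ComplexConjugate Matrix

/-- Vandermonde product `V(z) = ∏_{i<j} (z_i − z_j)`. -/
noncomputable def vand {n : ℕ} (z : Fin n → ℂ) : ℂ :=
  ∏ i : Fin n, ∏ j ∈ Finset.Ioi i, (z i - z j)

/-- Schur polynomial `s_λ(z) = det(z_i^{λ_j + n−1−j}) / V(z)` (junk value 0 if `V(z)=0`). -/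
noncomputable def schur {n : ℕ} (lam : Fin n → ℕ) (z : Fin n → ℂ) : ℂ :=
  Matrix.det (Matrix.of fun i j : Fin n => z i ^ (lam j + (n - 1 - (j : ℕ)))) / vand z

/-- The subvector of `x` indexed by an `n`-element subset of `Fin m` (in increasing order). -/
def subvec {m n : ℕ} (x : Fin m → ℂ) (s : {t : Finset (Fin m) // t.card = n}) :
    Fin n → ℂ := fun i => x (s.1.orderEmbOfFin s.2 i)

theorem Finset.image_orderEmbOfFin_comp_perm {m k : ℕ} (t : Finset (Fin m)) (h : t.card = k)
    (σ : Equiv.Perm (Fin k)) : Finset.univ.image (t.orderEmbOfFin h ∘ σ) = t := by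
  apply Finset.coe_injective
  rw [Finset.coe_image, Finset.coe_univ, Set.image_univ, Set.range_comp, Equiv.range_eq_univ,
    Set.image_univ, Finset.range_orderEmbOfFin]

theorem Finset.sum_injective_eq_sum_orderEmbOfFin_comp_perm {M : Type*} [AddCommMonoid M]
    {n m : ℕ} (F : (Fin n → Fin m) → M) :
    ∑ f with Function.Injective f, F f =
      ∑ s : {t : Finset (Fin m) // t.card = n}, ∑ σ : Equiv.Perm (Fin n),
        F (s.1.orderEmbOfFin s.2 ∘ σ) := by
  rw [← Finset.sum_product']
  symm
  refine Finset.sum_bij (fun p _ => p.1.1.orderEmbOfFin p.1.2 ∘ p.2) ?_ ?_ ?_ (fun _ _ => rfl)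
  · intro p _
    simpa using (p.1.1.orderEmbOfFin p.1.2).injective.comp p.2.injective
  · rintro ⟨⟨t₁, h₁⟩, σ₁⟩ - ⟨⟨t₂, h₂⟩, σ₂⟩ - heq
    obtain rfl : t₁ = t₂ := by
      rw [← image_orderEmbOfFin_comp_perm t₁ h₁ σ₁, ← image_orderEmbOfFin_comp_perm t₂ h₂ σ₂]
      exact congrArg (Finset.univ.image ·) heq
    obtain rfl : σ₁ = σ₂ :=
      Equiv.ext fun a => (t₁.orderEmbOfFin h₁).injective (congrFun heq a)
    rfl
  · intro f hf
    rw [Finset.mem_filter] at hf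
    set t := Finset.univ.image f
    have hcard : t.card = n := by
      rw [Finset.card_image_of_injective _ hf.2, Finset.card_univ, Fintype.card_fin]
    let g : Fin n → Fin n := fun a =>
      (t.orderIsoOfFin hcard).symm ⟨f a, Finset.mem_image_of_mem f (Finset.mem_univ a)⟩
    have hg : Function.Injective g := fun a b hab =>
      hf.2 (congrArg Subtype.val ((t.orderIsoOfFin hcard).symm.injective hab))
    refine ⟨(⟨t, hcard⟩, Equiv.ofBijective g (Finite.injective_iff_bijective.mp hg)),
      Finset.mem_univ _, funext fun a => ?_⟩
    simp [g, ← Finset.coe_orderIsoOfFin_apply]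

namespace Matrix

variable {R : Type*} [CommRing R] {n m : ℕ}

theorem det_mul_eq_sum_prod_mul_det_submatrix (C : Matrix (Fin n) (Fin m) R)
    (B : Matrix (Fin m) (Fin n) R) :
    (C * B).det = ∑ f : Fin n → Fin m, (∏ a, C a (f a)) * (B.submatrix f id).det := by
  have hrows : C * B = of fun a => ∑ k, C a k • B k := by
    ext a b; simp [mul_apply, Finset.sum_apply]
  rw [hrows]
  refine (detRowAlternating.toMultilinearMap.map_sum fun a k => C a k • B k).trans
    (Finset.sum_congr rfl fun f _ => ?_)
  exact (detRowAlternating.toMultilinearMap.map_smul_univ _ _).trans (smul_eq_mul _ _)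

theorem sum_perm_prod_mul_det_submatrix_comp (C : Matrix (Fin n) (Fin m) R)
    (B : Matrix (Fin m) (Fin n) R) (e : Fin n → Fin m) :
    ∑ σ : Equiv.Perm (Fin n), (∏ a, C a (e (σ a))) * (B.submatrix (e ∘ σ) id).det =
      (C.submatrix id e).det * (B.submatrix e id).det := by
  rw [← det_transpose, det_apply', Finset.sum_mul]
  refine Finset.sum_congr rfl fun σ _ => ?_
  rw [show B.submatrix (e ∘ σ) id = (B.submatrix e id).submatrix σ id from rfl, det_permute]
  simp only [transpose_apply, submatrix_apply, id]
  ring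

/-- Cauchy–Binet formula. -/
theorem det_mul_eq_sum_det_submatrix_mul_det_submatrix (C : Matrix (Fin n) (Fin m) R)
    (B : Matrix (Fin m) (Fin n) R) :
    (C * B).det = ∑ s : {t : Finset (Fin m) // t.card = n},
      (C.submatrix id (s.1.orderEmbOfFin s.2)).det *
        (B.submatrix (s.1.orderEmbOfFin s.2) id).det := by
  classical
  have hnoninj : ∀ f : Fin n → Fin m, ¬ Function.Injective f →
      (∏ a, C a (f a)) * (B.submatrix f id).det = 0 := by
    intro f hf
    obtain ⟨a, b, hab, hne⟩ : ∃ a b, f a = f b ∧ a ≠ b := by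
      simpa [Function.Injective] using hf
    rw [det_zero_of_row_eq hne (by ext c; simp [hab]), mul_zero]
  rw [det_mul_eq_sum_prod_mul_det_submatrix,
    ← Finset.sum_filter_of_ne fun f _ h => not_not.mp (mt (hnoninj f) h),
    Finset.sum_injective_eq_sum_orderEmbOfFin_comp_perm]
  exact Finset.sum_congr rfl fun s _ => sum_perm_prod_mul_det_submatrix_comp C B _

end Matrix

theorem Fin.sub_one_sub_le_of_strictAnti {n : ℕ} {d : Fin n → ℕ} (hd : StrictAnti d)
    (a : Fin n) : n - 1 - a ≤ d a := by
  rw [← Fin.card_Ioi, ← Finset.card_range (d a)]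
  exact Finset.card_le_card_of_injOn d
    (fun b hb => Finset.mem_range.mpr (hd (Finset.mem_Ioi.mp hb))) hd.injective.injOn

theorem exists_lt_eq_of_vand_eq_zero {k : ℕ} {z : Fin k → ℂ} (h : vand z = 0) :
    ∃ a b, a < b ∧ z a = z b := by
  simpa [vand, Finset.prod_eq_zero_iff, sub_eq_zero] using h

/-- Unlike the quotient defining `schur`, this holds also where `vand z = 0`. -/
theorem det_pow_eq_schur_mul_vand {k : ℕ} {e : Fin k → ℕ} (he : StrictAnti e)
    (z : Fin k → ℂ) :
    (Matrix.of fun a b => z a ^ e b).det = schur (fun b => e b - (k - 1 - b)) z * vand z := by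
  by_cases h : vand z = 0
  · obtain ⟨a, b, hab, hz⟩ := exists_lt_eq_of_vand_eq_zero h
    rw [h, mul_zero]
    exact Matrix.det_zero_of_row_eq hab.ne (funext fun c => by simp [hz])
  · simp only [schur, Nat.sub_add_cancel (Fin.sub_one_sub_le_of_strictAnti he _),
      div_mul_cancel₀ _ h]

theorem minor_eq_sum_schur_general (m N : ℕ)
    (d : Fin (N + 1) → ℕ) (hd : StrictAnti d) (x : Fin m → ℂ)
    (A : Matrix (Fin m) (Fin (N + 1)) ℂ) (hA : ∀ k i, A k i = x k ^ d i)
    (i j : Fin (N + 1)) :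
    ((Aᴴ * A).submatrix j.succAbove i.succAbove).det =
      ∑ l : {t : Finset (Fin m) // t.card = N},
        schur (fun r : Fin N => d (i.succAbove r) - (N - 1 - (r : ℕ))) (subvec x l) *
          conj (schur (fun r : Fin N => d (j.succAbove r) - (N - 1 - (r : ℕ))) (subvec x l)) *
          ((‖vand (subvec x l)‖ : ℂ)) ^ 2 := by
  have hminor (p : Fin (N + 1)) (l : {t : Finset (Fin m) // t.card = N}) :
      (A.submatrix (l.1.orderEmbOfFin l.2) p.succAbove).det =
        schur (fun r : Fin N => d (p.succAbove r) - (N - 1 - (r : ℕ))) (subvec x l) *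
          vand (subvec x l) := by
    rw [← det_pow_eq_schur_mul_vand (e := fun r => d (p.succAbove r))
      (hd.comp_strictMono (Fin.strictMono_succAbove p))]
    congr 1
    ext a b
    simp [hA, subvec]
  rw [Matrix.submatrix_mul _ _ _ (Equiv.refl _) _ (Equiv.refl _).bijective,
    Matrix.det_mul_eq_sum_det_submatrix_mul_det_submatrix]
  refine Finset.sum_congr rfl fun l _ => ?_
  simp only [Matrix.submatrix_submatrix, ← Matrix.conjTranspose_submatrix,
    Matrix.det_conjTranspose, Equiv.coe_refl, Function.comp_id, Function.id_comp, hminor]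
  rw [← Complex.ofReal_pow, Complex.sq_norm, ← Complex.mul_conj]
  simp only [star_mul', Complex.star_def]
  ring

/-- the `(j,i)` minor of `A*A` (delete row `j`, column `i`) equals
`∑_{l ∈ C([m],n−1)} s_{λ[i]}(x_l) conj(s_{λ[j]}(x_l)) |V(x_l)|²`, where `n = N+1`,
`λ[i] = d⟨i⟩ − δ(n−1)`. -/
theorem minor_eq_sum_schur (m N : ℕ) (hmn : N + 1 ≤ m)
    (d : Fin (N + 1) → ℕ) (hd : StrictAnti d) (x : Fin m → ℂ)
    (A : Matrix (Fin m) (Fin (N + 1)) ℂ) (hA : ∀ k i, A k i = x k ^ d i)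
    (hinj : Function.Injective A.mulVec)
    (i j : Fin (N + 1)) (hij : j ≠ i) :
    ((Aᴴ * A).submatrix j.succAbove i.succAbove).det =
      ∑ l : {t : Finset (Fin m) // t.card = N},
        schur (fun r : Fin N => d (i.succAbove r) - (N - 1 - (r : ℕ))) (subvec x l) *
          conj (schur (fun r : Fin N => d (j.succAbove r) - (N - 1 - (r : ℕ))) (subvec x l)) *
          ((‖vand (subvec x l)‖ : ℂ)) ^ 2 :=
  minor_eq_sum_schur_general m N d hd x A hA i j
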